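/- arXiv:2310.04861 — 3 statements merged into one kernel-verified Lean document; each statement's English description precedes it below -/
import Mathlib

section
/- Let A ∈ ℝ^{N×N} be symmetric with A·1_N = 0, where 1_N is the all-ones vector. Define the finite difference matrix ΔA by (ΔA)_{t,t'} = N²·(A_{t,t'} - A_{t-1,t'} - A_{t,t'-1} + A_{t-1,t'-1}) with periodic index extension. Then (ΔA)·1_N = 0 and, with F the N×N DFT matrix and Γ = diag(γ_1,…,γ_N) where γ_1 = 1 and γ_t = N^{-1}(1 - exp(-2πi(t-1)/N))^{-1} for t > 1, one has F A Fᵀ = Γ F (ΔA) Fᵀ Γ. -/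
/-!
The DFT matrix is the Vandermonde matrix of the `N`-th roots of unity `ω s = exp (-2πi s / N)`.
Since `F s (t + 1) = ω s * F s t`, multiplying by `F` turns the cyclic backward difference in
either index into multiplication by `1 - ω s`, so `F ΔA Fᵀ = N² D (F A Fᵀ) D` with
`D = diag (1 - ω)`. For `s ≠ 0` the factor `N (1 - ω s)` is inverted by `γ s`; for `s = 0` it
vanishes, but so do row and column `0` of `F A Fᵀ`, because `A` has zero row and column sums.
-/

open Complex Matrix

theorem pow_val_add_one_of_pow_eq_one {M : Type*} [Monoid M] {N : ℕ} [NeZero N] {x : M}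
    (hx : x ^ N = 1) (j : Fin N) : x ^ ((j + 1 : Fin N) : ℕ) = x ^ ((j : ℕ) + 1) := by
  rw [Fin.val_add, Fin.val_one', Nat.add_mod_mod, ← pow_mod_orderOf,
    Nat.mod_mod_of_dvd _ (orderOf_dvd_of_pow_eq_one hx), pow_mod_orderOf]

namespace Matrix

variable {N : ℕ} [NeZero N] {m n R : Type*}

def rowDiff [Sub R] (M : Matrix (Fin N) n R) : Matrix (Fin N) n R :=
  M - M.submatrix (· - 1) id

def colDiff [Sub R] (M : Matrix m (Fin N) R) : Matrix m (Fin N) R :=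
  M - M.submatrix id (· - 1)

theorem colDiff_eq_transpose_rowDiff_transpose [Sub R] (M : Matrix m (Fin N) R) :
    colDiff M = (rowDiff Mᵀ)ᵀ :=
  rfl

theorem colDiff_mulVec_one [Fintype m] [NonAssocRing R] (M : Matrix m (Fin N) R) :
    colDiff M *ᵥ 1 = 0 := by
  ext i
  simp only [colDiff, mulVec, dotProduct, Pi.one_apply, mul_one, sub_apply, submatrix_apply, id,
    Finset.sum_sub_distrib, Pi.zero_apply]
  exact sub_eq_zero.2 (Equiv.sum_comp (Equiv.subRight 1) (M i)).symm

section Vandermonde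

variable [CommRing R] {v : Fin N → R}

theorem vandermonde_submatrix_add_one (hv : ∀ i, v i ^ N = 1) :
    (vandermonde v).submatrix id (· + 1) = diagonal v * vandermonde v := by
  ext i j
  simp only [submatrix_apply, id, vandermonde_apply, diagonal_mul,
    pow_val_add_one_of_pow_eq_one (hv i), pow_succ']

theorem vandermonde_mul_rowDiff [Fintype n] (hv : ∀ i, v i ^ N = 1) (M : Matrix (Fin N) n R) :
    vandermonde v * rowDiff M = diagonal (1 - v) * vandermonde v * M := by
  have hshift : vandermonde v * M.submatrix (· - 1) id = diagonal v * vandermonde v * M := by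
    have hcomp : (· + 1) ∘ Equiv.subRight (1 : Fin N) = id := funext (sub_add_cancel · 1)
    have := submatrix_mul_equiv ((vandermonde v).submatrix id (· + 1)) M id (Equiv.subRight 1) id
    rwa [submatrix_submatrix, hcomp, Function.comp_id, submatrix_id_id, submatrix_id_id,
      vandermonde_submatrix_add_one hv] at this
  have hdiag : diagonal (1 - v) = 1 - diagonal v := by
    rw [← diagonal_one, diagonal_sub]
    rfl
  rw [rowDiff, Matrix.mul_sub, hshift, hdiag, Matrix.sub_mul, Matrix.sub_mul, Matrix.one_mul]

theorem colDiff_mul_vandermonde_transpose [Fintype m] (hv : ∀ i, v i ^ N = 1)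
    (M : Matrix m (Fin N) R) :
    colDiff M * (vandermonde v)ᵀ = M * (vandermonde v)ᵀ * diagonal (1 - v) := by
  rw [colDiff_eq_transpose_rowDiff_transpose, ← transpose_mul, vandermonde_mul_rowDiff hv,
    transpose_mul, transpose_mul, diagonal_transpose, transpose_transpose, Matrix.mul_assoc]

theorem vandermonde_mul_colDiff_rowDiff_mul_transpose (hv : ∀ i, v i ^ N = 1)
    (M : Matrix (Fin N) (Fin N) R) :
    vandermonde v * colDiff (rowDiff M) * (vandermonde v)ᵀ =
      diagonal (1 - v) * (vandermonde v * M * (vandermonde v)ᵀ) * diagonal (1 - v) := by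
  rw [Matrix.mul_assoc, colDiff_mul_vandermonde_transpose hv, ← Matrix.mul_assoc,
    ← Matrix.mul_assoc, vandermonde_mul_rowDiff hv]
  simp only [Matrix.mul_assoc]

theorem vandermonde_mul_mul_apply_zero_left [Fintype m] (hv : v 0 = 1)
    {M : Matrix (Fin N) m R} (hM : 1 ᵥ* M = 0) (B : Matrix m n R) (j : n) :
    (vandermonde v * M * B) 0 j = 0 := by
  have hrow : (vandermonde v * M) 0 = 1 ᵥ* M := by
    ext k
    simp [mul_apply, vecMul, dotProduct, vandermonde_apply, hv]
  rw [mul_apply, hrow, hM]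
  simp only [Pi.zero_apply, zero_mul, Finset.sum_const_zero]

theorem mul_mul_vandermonde_transpose_apply_zero_right [Fintype m] (hv : v 0 = 1)
    {M : Matrix m (Fin N) R} (hM : M *ᵥ 1 = 0) (B : Matrix n m R) (i : n) :
    (B * M * (vandermonde v)ᵀ) i 0 = 0 := by
  have hcol : ∀ k, (M * (vandermonde v)ᵀ) k 0 = (M *ᵥ 1) k := by
    intro k
    simp [mul_apply, mulVec, dotProduct, vandermonde_apply, hv]
  rw [Matrix.mul_assoc, mul_apply]
  simp only [hcol, hM, Pi.zero_apply, mul_zero, Finset.sum_const_zero]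

end Vandermonde

theorem diagonal_mul_mul_diagonal_eq_self [Fintype n] [DecidableEq n] [Semiring R]
    {X : Matrix n n R} {i₀ : n} (hrow : ∀ j, X i₀ j = 0) (hcol : ∀ i, X i i₀ = 0)
    {d : n → R} (hd : ∀ i ≠ i₀, d i = 1) :
    diagonal d * X * diagonal d = X := by
  ext i j
  rw [mul_diagonal, diagonal_mul]
  rcases eq_or_ne i i₀ with rfl | hi
  · simp [hrow]
  rcases eq_or_ne j i₀ with rfl | hj
  · simp [hcol]
  rw [hd i hi, hd j hj, one_mul, mul_one]

theorem vandermonde_mul_mul_transpose_eq_of_sums_eq_zero [CommRing R] {v : Fin N → R}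
    (hv : ∀ i, v i ^ N = 1) (hv0 : v 0 = 1) {M : Matrix (Fin N) (Fin N) R}
    (hrow : M *ᵥ 1 = 0) (hcol : 1 ᵥ* M = 0) (c : R) {γ : Fin N → R}
    (hγ : ∀ i ≠ 0, γ i * (c * (1 - v i)) = 1) :
    vandermonde v * M * (vandermonde v)ᵀ =
      diagonal γ * vandermonde v * (c ^ 2 • colDiff (rowDiff M)) * (vandermonde v)ᵀ *
        diagonal γ := by
  set X := vandermonde v * M * (vandermonde v)ᵀ
  calc X = diagonal (fun i => γ i * (c * (1 - v i))) * X *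
        diagonal (fun i => γ i * (c * (1 - v i))) :=
      (diagonal_mul_mul_diagonal_eq_self (vandermonde_mul_mul_apply_zero_left hv0 hcol _)
        (mul_mul_vandermonde_transpose_apply_zero_right hv0 hrow _) hγ).symm
    _ = diagonal γ * (vandermonde v * (c ^ 2 • colDiff (rowDiff M)) * (vandermonde v)ᵀ) *
        diagonal γ := by
      rw [Matrix.mul_smul, Matrix.smul_mul, vandermonde_mul_colDiff_rowDiff_mul_transpose hv]
      ext i j
      simp only [mul_diagonal, diagonal_mul, smul_apply, smul_eq_mul, Pi.sub_apply, Pi.one_apply]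
      ring
    _ = _ := by simp only [Matrix.mul_assoc]

end Matrix

namespace Complex

theorem exp_neg_two_pi_I_mul_div_pow (N k l : ℕ) :
    exp (-2 * Real.pi * I * k / N) ^ l = exp (-2 * Real.pi * I * k * l / N) := by
  rw [← exp_nat_mul]
  ring_nf

theorem exp_neg_two_pi_I_mul_div_eq_inv_pow (N k : ℕ) :
    exp (-2 * Real.pi * I * k / N) = (exp (2 * Real.pi * I / N))⁻¹ ^ k := by
  rw [← exp_neg, ← exp_nat_mul]
  ring_nf

variable {N : ℕ} [NeZero N]

theorem exp_neg_two_pi_I_mul_div_pow_self (k : ℕ) : exp (-2 * Real.pi * I * k / N) ^ N = 1 := by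
  rw [exp_neg_two_pi_I_mul_div_eq_inv_pow, pow_right_comm,
    (isPrimitiveRoot_exp N (NeZero.ne N)).inv.pow_eq_one, one_pow]

theorem exp_neg_two_pi_I_mul_div_ne_one {k : ℕ} (hk0 : k ≠ 0) (hkN : k < N) :
    exp (-2 * Real.pi * I * k / N) ≠ 1 := by
  rw [exp_neg_two_pi_I_mul_div_eq_inv_pow]
  exact (isPrimitiveRoot_exp N (NeZero.ne N)).inv.pow_ne_one_of_pos_of_lt hk0 hkN

end Complex

theorem dft_diff_matrix_general (N : ℕ) [NeZero N]
    (A : Matrix (Fin N) (Fin N) ℝ) (hsymm : A.IsSymm)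
    (hsum : A.mulVec (fun _ => 1) = 0)
    (ΔA : Matrix (Fin N) (Fin N) ℝ)
    (hΔA : ∀ t t', ΔA t t' =
      (N : ℝ) ^ 2 * (A t t' - A (t - 1) t' - A t (t' - 1) + A (t - 1) (t' - 1)))
    (F : Matrix (Fin N) (Fin N) ℂ)
    (hF : ∀ t t', F t t' =
      Complex.exp (-2 * Real.pi * Complex.I * ((t : ℕ) : ℂ) * ((t' : ℕ) : ℂ) / N))
    (γ : Fin N → ℂ)
    (hγ : ∀ t : Fin N, t ≠ 0 →
      γ t = (N : ℂ)⁻¹ * (1 - Complex.exp (-2 * Real.pi * Complex.I * ((t : ℕ) : ℂ) / N))⁻¹) :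
    ΔA.mulVec (fun _ => 1) = 0 ∧
    F * A.map (fun a => (a : ℂ)) * F.transpose =
      Matrix.diagonal γ * F * ΔA.map (fun a => (a : ℂ)) * F.transpose * Matrix.diagonal γ := by
  set ω : Fin N → ℂ := fun s => exp (-2 * Real.pi * I * (s : ℕ) / N)
  have hFω : F = vandermonde ω := by
    ext t t'
    rw [hF, vandermonde_apply, exp_neg_two_pi_I_mul_div_pow]
  have hγω : ∀ s ≠ 0, γ s * (N * (1 - ω s)) = 1 := by
    intro s hs
    have hω1 : 1 - ω s ≠ 0 :=
      sub_ne_zero.2 (exp_neg_two_pi_I_mul_div_ne_one (Fin.val_ne_zero_iff.2 hs) s.isLt).symm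
    rw [hγ s hs]
    change (N : ℂ)⁻¹ * (1 - ω s)⁻¹ * (N * (1 - ω s)) = 1
    field_simp [NeZero.ne N]
  have hΔ : ΔA = (N : ℝ) ^ 2 • colDiff (rowDiff A) := by
    ext
    simp only [hΔA, Matrix.smul_apply, colDiff, rowDiff, Matrix.sub_apply, submatrix_apply, id,
      smul_eq_mul]
    ring
  have hΔℂ : ΔA.map ofReal = (N : ℂ) ^ 2 • colDiff (rowDiff (A.map ofReal)) := by
    ext
    simp [hΔ, rowDiff, colDiff]
  have hrow : A.map ofReal *ᵥ 1 = 0 := by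
    ext i
    refine (ofRealHom.map_mulVec A (fun _ => 1) i).symm.trans ?_
    simp [hsum]
  have hcol : 1 ᵥ* A.map ofReal = 0 := by
    rw [← mulVec_transpose, ← transpose_map, hsymm, hrow]
  refine ⟨by change ΔA *ᵥ 1 = 0; rw [hΔ, smul_mulVec, colDiff_mulVec_one, smul_zero], ?_⟩
  rw [hFω, hΔℂ]
  exact vandermonde_mul_mul_transpose_eq_of_sums_eq_zero
    (fun s => exp_neg_two_pi_I_mul_div_pow_self _) (by simp) hrow hcol _ hγω

theorem dft_diff_matrix (N : ℕ) [NeZero N]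
    (A : Matrix (Fin N) (Fin N) ℝ) (hsymm : A.IsSymm)
    (hsum : A.mulVec (fun _ => 1) = 0)
    (ΔA : Matrix (Fin N) (Fin N) ℝ)
    (hΔA : ∀ t t', ΔA t t' =
      (N : ℝ) ^ 2 * (A t t' - A (t - 1) t' - A t (t' - 1) + A (t - 1) (t' - 1)))
    (F : Matrix (Fin N) (Fin N) ℂ)
    (hF : ∀ t t', F t t' =
      Complex.exp (-2 * Real.pi * Complex.I * ((t : ℕ) : ℂ) * ((t' : ℕ) : ℂ) / N))
    (γ : Fin N → ℂ) (hγ0 : γ 0 = 1)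
    (hγ : ∀ t : Fin N, t ≠ 0 →
      γ t = (N : ℂ)⁻¹ * (1 - Complex.exp (-2 * Real.pi * Complex.I * ((t : ℕ) : ℂ) / N))⁻¹) :
    ΔA.mulVec (fun _ => 1) = 0 ∧
    F * A.map (fun a => (a : ℂ)) * F.transpose =
      Matrix.diagonal γ * F * ΔA.map (fun a => (a : ℂ)) * F.transpose * Matrix.diagonal γ :=
  dft_diff_matrix_general N A hsymm hsum ΔA hΔA F hF γ hγ
end

section
/- Let A ∈ ℝ^{N×N} be symmetric with A·1_N = 0. For a subset I ⊆ {1,…,N} with complement J, let Â = F A Fᵀ and let Â_I denote the matrix equal to on the I×I block and zero elsewhere. Define A^{res} = N^{-2} F* (Â - Â_I) (F*)ᵀ. Then ‖A^{res}‖_op ≤ 3 · max_{t∈J}|γ_t|^m · N · ‖Δ^{(m,m)}A‖_max, provided |γ_t| ≤ 1 for all t. -/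
/-!
With `ω = exp(-2πi/N)`, the transform `X ↦ F X Fᵀ` turns the periodic backward difference
`1 - S` into multiplication by `1 - ω^t`, so that `(Δ^{(1,1)} X)^ = N² D X̂ D` with
`D = diag(1 - ω^t)`. Since `γ_t N (1 - ω^t) = 1` for `t ≠ 0`, and row and column `0` of `X̂`
vanish whenever `X` has zero row and column sums (which every difference has), `m` steps give
`Â = Γ^m Ĉ Γ^m` with `Γ = diag γ` and `C = Δ^{(m,m)} A`. Writing `P` for the coordinate projection
onto `I` and `Q = 1 - P`, we get `Â - Â_I = Q Â + P Â Q`, and each of the two terms carries a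
factor `Q Γ^m` or `Γ^m Q` of norm at most `max_{t ∈ J} |γ_t|^m`. Finally `‖F‖ = √N` and
`‖Ĉ‖ ≤ N ‖C‖ ≤ N² ‖C‖_max`, which gives the bound with `2` in place of `3`.
-/

open Complex Matrix

/-- The mixed second finite difference with periodic indexing, scaled by `N²`. -/
def mixedDiff (N : ℕ) [NeZero N] (A : Matrix (Fin N) (Fin N) ℝ) : Matrix (Fin N) (Fin N) ℝ :=
  Matrix.of fun t t' =>
    (N : ℝ) ^ 2 * (A t t' - A (t - 1) t' - A t (t' - 1) + A (t - 1) (t' - 1))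

open scoped Matrix.Norms.L2Operator

section CyclicShift

variable {N : ℕ} [NeZero N] {R : Type*}

def cyclicShift (N : ℕ) [NeZero N] (R : Type*) [Zero R] [One R] : Matrix (Fin N) (Fin N) R :=
  Equiv.Perm.permMatrix R (Equiv.subRight (1 : Fin N))

variable [CommRing R]

lemma cyclicShift_mul_apply (X : Matrix (Fin N) (Fin N) R) (i j : Fin N) :
    (cyclicShift N R * X) i j = X (i - 1) j := by
  rw [cyclicShift, PEquiv.toMatrix_toPEquiv_mul]
  rfl

lemma mul_cyclicShift_transpose_apply (X : Matrix (Fin N) (Fin N) R) (i j : Fin N) :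
    (X * (cyclicShift N R)ᵀ) i j = X i (j - 1) := by
  rw [cyclicShift, transpose_permMatrix, PEquiv.mul_toMatrix_toPEquiv]
  rfl

lemma one_vecMul_one_sub_cyclicShift : (1 : Fin N → R) ᵥ* (1 - cyclicShift N R) = 0 := by
  rw [vecMul_sub, vecMul_one, cyclicShift, PEquiv.vecMul_toMatrix_toPEquiv]
  exact sub_self _

def cyclicMixedDiff (N : ℕ) [NeZero N] (R : Type*) [CommRing R]
    (X : Matrix (Fin N) (Fin N) R) : Matrix (Fin N) (Fin N) R :=
  (N : R) ^ 2 • ((1 - cyclicShift N R) * X * (1 - cyclicShift N R)ᵀ)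

lemma cyclicMixedDiff_mulVec_one (X : Matrix (Fin N) (Fin N) R) :
    cyclicMixedDiff N R X *ᵥ 1 = 0 := by
  rw [cyclicMixedDiff, smul_mulVec, ← mulVec_mulVec, mulVec_transpose,
    one_vecMul_one_sub_cyclicShift, mulVec_zero, smul_zero]

lemma one_vecMul_cyclicMixedDiff (X : Matrix (Fin N) (Fin N) R) :
    1 ᵥ* cyclicMixedDiff N R X = 0 := by
  rw [cyclicMixedDiff, vecMul_smul, ← vecMul_vecMul, ← vecMul_vecMul,
    one_vecMul_one_sub_cyclicShift, zero_vecMul, zero_vecMul, smul_zero]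

lemma map_mixedDiff (M : Matrix (Fin N) (Fin N) ℝ) :
    (mixedDiff N M).map ((↑) : ℝ → ℂ) = cyclicMixedDiff N ℂ (M.map (↑)) := by
  ext i j
  simp only [cyclicMixedDiff, transpose_sub, transpose_one, sub_mul, mul_sub, one_mul, mul_one,
    Matrix.smul_apply, Matrix.sub_apply, cyclicShift_mul_apply, mul_cyclicShift_transpose_apply,
    map_apply, mixedDiff, of_apply, smul_eq_mul]
  push_cast
  ring

lemma map_iterate_mixedDiff (M : Matrix (Fin N) (Fin N) ℝ) (m : ℕ) :
    ((mixedDiff N)^[m] M).map ((↑) : ℝ → ℂ) = (cyclicMixedDiff N ℂ)^[m] (M.map (↑)) :=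
  Function.Semiconj.iterate_right (f := (Matrix.map · ofReal)) map_mixedDiff m M

end CyclicShift

section FourierMatrix

variable {N : ℕ} {R : Type*} [CommRing R] {ω : R}

def fourierMatrix (N : ℕ) (ω : R) : Matrix (Fin N) (Fin N) R :=
  of fun t k => ω ^ ((t : ℕ) * k)

def diffSymbol (N : ℕ) (ω : R) (t : Fin N) : R :=
  1 - ω ^ (t : ℕ)

lemma fourierMatrix_transpose : (fourierMatrix N ω)ᵀ = fourierMatrix N ω := by
  ext t k
  simp only [transpose_apply, fourierMatrix, of_apply, mul_comm]

variable [NeZero N]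

lemma diffSymbol_ne_zero (hω : IsPrimitiveRoot ω N) {t : Fin N} (ht : t ≠ 0) :
    diffSymbol N ω t ≠ 0 :=
  sub_ne_zero.2 (hω.pow_ne_one_of_pos_of_lt (Fin.val_ne_zero_iff.2 ht) t.isLt).symm

lemma fourierMatrix_mul_one_sub_cyclicShift (hω : ω ^ N = 1) :
    fourierMatrix N ω * (1 - cyclicShift N R) =
      diagonal (diffSymbol N ω) * fourierMatrix N ω := by
  ext t k
  rw [Matrix.mul_sub, Matrix.mul_one, Matrix.sub_apply, cyclicShift,
    PEquiv.mul_toMatrix_toPEquiv, diagonal_mul]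
  have hk : (t : ℕ) * ↑(k + 1) ≡ ↑t + ↑t * ↑k [MOD N] := by
    have : ((k + 1 : Fin N) : ℕ) ≡ k + 1 [MOD N] := by simp [Fin.val_add, Nat.ModEq, Nat.add_mod]
    simpa [mul_add, add_comm] using this.mul_left t
  simp only [fourierMatrix, of_apply, submatrix_apply, id, Equiv.subRight_symm_apply]
  rw [diffSymbol, pow_eq_pow_mod (_ * ↑(k + 1)) hω, hk, ← pow_eq_pow_mod _ hω, pow_add]
  ring

lemma fourierMatrix_conj_cyclicMixedDiff (hω : ω ^ N = 1) (X : Matrix (Fin N) (Fin N) R) :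
    fourierMatrix N ω * cyclicMixedDiff N R X * (fourierMatrix N ω)ᵀ =
      (N : R) ^ 2 • (diagonal (diffSymbol N ω) * (fourierMatrix N ω * X * (fourierMatrix N ω)ᵀ) *
        diagonal (diffSymbol N ω)) := by
  rw [cyclicMixedDiff, Matrix.mul_smul, Matrix.smul_mul]
  congr 1
  calc _ = (fourierMatrix N ω * (1 - cyclicShift N R)) * X *
        (fourierMatrix N ω * (1 - cyclicShift N R))ᵀ := by
        simp only [transpose_mul, Matrix.mul_assoc]
    _ = _ := by
        simp only [fourierMatrix_mul_one_sub_cyclicShift hω, transpose_mul, diagonal_transpose,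
          Matrix.mul_assoc]

lemma fourierMatrix_conj_apply_zero_left {X : Matrix (Fin N) (Fin N) R} (hX : 1 ᵥ* X = 0)
    (t : Fin N) : (fourierMatrix N ω * X * (fourierMatrix N ω)ᵀ) 0 t = 0 := by
  have h : (fourierMatrix N ω * X) 0 = 0 := by
    ext k
    simpa [Matrix.mul_apply, vecMul, dotProduct, fourierMatrix] using congrFun hX k
  rw [Matrix.mul_apply, h]
  simp

lemma fourierMatrix_conj_apply_zero_right {X : Matrix (Fin N) (Fin N) R} (hX : X *ᵥ 1 = 0)
    (t : Fin N) : (fourierMatrix N ω * X * (fourierMatrix N ω)ᵀ) t 0 = 0 := by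
  have h : (fourierMatrix N ω * X) *ᵥ 1 = 0 := by rw [← mulVec_mulVec, hX, mulVec_zero]
  rw [Matrix.mul_apply]
  simpa [mulVec, dotProduct, fourierMatrix] using congrFun h t

lemma fourierMatrix_conj_eq_diagonal_mul_cyclicMixedDiff (hω : ω ^ N = 1) {γ : Fin N → R}
    (hγ : ∀ t ≠ 0, γ t * (N * diffSymbol N ω t) = 1)
    {X : Matrix (Fin N) (Fin N) R} (hrow : X *ᵥ 1 = 0) (hcol : 1 ᵥ* X = 0) :
    fourierMatrix N ω * X * (fourierMatrix N ω)ᵀ =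
      diagonal γ * (fourierMatrix N ω * cyclicMixedDiff N R X * (fourierMatrix N ω)ᵀ) *
        diagonal γ := by
  rw [fourierMatrix_conj_cyclicMixedDiff hω]
  ext t t'
  rw [mul_diagonal, diagonal_mul, Matrix.smul_apply, mul_diagonal, diagonal_mul, smul_eq_mul]
  by_cases ht : t = 0
  · subst ht; simp [fourierMatrix_conj_apply_zero_left hcol, diffSymbol]
  by_cases ht' : t' = 0
  · subst ht'; simp [fourierMatrix_conj_apply_zero_right hrow, diffSymbol]
  set Y := (fourierMatrix N ω * X * (fourierMatrix N ω)ᵀ) t t'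
  linear_combination (-Y * (γ t' * (N * diffSymbol N ω t'))) * hγ t ht - Y * hγ t' ht'

lemma fourierMatrix_conj_eq_diagonal_pow_mul_iterate (hω : ω ^ N = 1) {γ : Fin N → R}
    (hγ : ∀ t ≠ 0, γ t * (N * diffSymbol N ω t) = 1) (m : ℕ)
    {X : Matrix (Fin N) (Fin N) R} (hrow : X *ᵥ 1 = 0) (hcol : 1 ᵥ* X = 0) :
    fourierMatrix N ω * X * (fourierMatrix N ω)ᵀ =
      diagonal (γ ^ m) *
        (fourierMatrix N ω * (cyclicMixedDiff N R)^[m] X * (fourierMatrix N ω)ᵀ) *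
        diagonal (γ ^ m) := by
  induction m generalizing X with
  | zero => simp
  | succ m ih =>
    rw [fourierMatrix_conj_eq_diagonal_mul_cyclicMixedDiff hω hγ hrow hcol,
      ih (cyclicMixedDiff_mulVec_one X) (one_vecMul_cyclicMixedDiff X),
      Function.iterate_succ_apply]
    ext t t'
    simp only [mul_diagonal, diagonal_mul, Pi.pow_apply, Pi.mul_apply, pow_succ]
    ring

end FourierMatrix

section MatrixDecomposition

variable {R : Type*} [Semiring R] {n : Type*} [Fintype n] [DecidableEq n]

def blockProj (R : Type*) [Zero R] [One R] {n : Type*} [DecidableEq n] (I : Finset n) :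
    Matrix n n R :=
  diagonal fun k => if k ∈ I then 1 else 0

lemma blockProj_mul_mul_blockProj_apply (I : Finset n) (B : Matrix n n R) (i j : n) :
    (blockProj R I * B * blockProj R I) i j = if i ∈ I ∧ j ∈ I then B i j else 0 := by
  rw [blockProj, mul_diagonal, diagonal_mul]
  split_ifs <;> simp_all

lemma blockProj_add_blockProj_compl (I : Finset n) : blockProj R I + blockProj R Iᶜ = 1 := by
  rw [blockProj, blockProj, diagonal_add, ← diagonal_one]
  congr 1
  ext k
  by_cases hk : k ∈ I <;> simp [hk]

lemma eq_sum_diagonal_mul_permMatrix_addRight {G : Type*} [AddGroup G] [Fintype G]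
    [DecidableEq G] (M : Matrix G G R) :
    M = ∑ s : G, diagonal (fun i => M i (i + s)) * Equiv.Perm.permMatrix R (Equiv.addRight s) := by
  ext i j
  simp only [Matrix.sum_apply, diagonal_mul, PEquiv.toMatrix_apply, Equiv.toPEquiv_apply,
    Option.mem_def, Option.some.injEq, Equiv.coe_addRight, mul_ite, mul_one, mul_zero]
  simp_rw [← eq_neg_add_iff_add_eq]
  simp

end MatrixDecomposition

section L2OpNorm

variable {𝕜 : Type*} [RCLike 𝕜] {n : Type*} [Fintype n] [DecidableEq n]

lemma l2_opNorm_diagonal_le {v : n → 𝕜} {c : ℝ} (hc : 0 ≤ c) (h : ∀ i, ‖v i‖ ≤ c) :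
    ‖diagonal v‖ ≤ c := by
  rw [l2_opNorm_diagonal]
  exact (pi_norm_le_iff_of_nonneg hc).2 h

lemma l2_opNorm_mul_mul_le_of_le_sqrt {U V : Matrix n n 𝕜} {c : ℝ} (hc : 0 ≤ c)
    (hU : ‖U‖ ≤ √c) (hV : ‖V‖ ≤ √c) (X : Matrix n n 𝕜) : ‖U * X * V‖ ≤ c * ‖X‖ :=
  calc ‖U * X * V‖ ≤ √c * ‖X‖ * √c := by
        grw [norm_mul₃_le, hU, hV]
    _ = c * ‖X‖ := by rw [mul_right_comm, Real.mul_self_sqrt hc]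

lemma l2_opNorm_le_card_mul {G : Type*} [AddGroup G] [Fintype G] [DecidableEq G]
    (M : Matrix G G 𝕜) {c : ℝ} (h : ∀ i j, ‖M i j‖ ≤ c) : ‖M‖ ≤ Fintype.card G * c := by
  have hc : 0 ≤ c := (norm_nonneg _).trans (h 0 0)
  rw [eq_sum_diagonal_mul_permMatrix_addRight M]
  calc _ ≤ ∑ s : G,
        ‖diagonal (fun i => M i (i + s)) * Equiv.Perm.permMatrix 𝕜 (Equiv.addRight s)‖ :=
        norm_sum_le _ _
    _ ≤ ∑ _s : G, c * 1 := by
        gcongr with s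
        exact (l2_opNorm_mul _ _).trans <| mul_le_mul (l2_opNorm_diagonal_le hc fun i => h _ _)
          (permMatrix_l2_opNorm_le _) (norm_nonneg _) hc
    _ = _ := by simp

lemma l2_opNorm_blockProj_mul_diagonal_le (I : Finset n) {d : n → 𝕜} {c : ℝ} (hc : 0 ≤ c)
    (h : ∀ i ∈ I, ‖d i‖ ≤ c) : ‖blockProj 𝕜 I * diagonal d‖ ≤ c := by
  rw [blockProj, diagonal_mul_diagonal]
  refine l2_opNorm_diagonal_le hc fun k => ?_
  by_cases hk : k ∈ I <;> simp [hk, hc, h]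

lemma l2_opNorm_sub_blockProj_conj_le (I : Finset n) (C : Matrix n n 𝕜) {d : n → 𝕜} {g : ℝ}
    (hg : 0 ≤ g) (hd : ∀ i, ‖d i‖ ≤ 1) (hdg : ∀ i ∉ I, ‖d i‖ ≤ g) :
    ‖diagonal d * C * diagonal d - blockProj 𝕜 I * (diagonal d * C * diagonal d) * blockProj 𝕜 I‖
      ≤ 2 * g * ‖C‖ := by
  set P := blockProj 𝕜 I
  set Q := blockProj 𝕜 Iᶜ
  have hsplit : diagonal d * C * diagonal d - P * (diagonal d * C * diagonal d) * P =
      (Q * diagonal d) * C * diagonal d + (P * diagonal d) * C * (diagonal d * Q) := by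
    have hQ : Q = 1 - P := eq_sub_of_add_eq' (blockProj_add_blockProj_compl I)
    rw [hQ]
    noncomm_ring
  have hQd : ‖Q * diagonal d‖ ≤ g :=
    l2_opNorm_blockProj_mul_diagonal_le _ hg fun i hi => hdg i (Finset.mem_compl.1 hi)
  have hdQ : ‖diagonal d * Q‖ ≤ g := (commute_diagonal d _).eq ▸ hQd
  have hPd : ‖P * diagonal d‖ ≤ 1 :=
    l2_opNorm_blockProj_mul_diagonal_le _ zero_le_one fun i _ => hd i
  have hD : ‖diagonal d‖ ≤ 1 := l2_opNorm_diagonal_le zero_le_one hd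
  rw [hsplit]
  calc _ ≤ g * ‖C‖ * 1 + 1 * ‖C‖ * g := by
        grw [norm_add_le, norm_mul₃_le, norm_mul₃_le, hQd, hdQ, hPd, hD]
    _ = 2 * g * ‖C‖ := by ring

end L2OpNorm

section ComplexFourierMatrix

variable {N : ℕ} {ω : ℂ}

lemma exp_neg_two_pi_I_div_pow (N k : ℕ) :
    Complex.exp (-2 * Real.pi * Complex.I / N) ^ k =
      Complex.exp (-2 * Real.pi * Complex.I * k / N) := by
  rw [← Complex.exp_nat_mul]
  ring_nf

lemma fourierMatrix_exp_neg_apply (t t' : Fin N) :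
    fourierMatrix N (Complex.exp (-2 * Real.pi * Complex.I / N)) t t' =
      Complex.exp (-2 * Real.pi * Complex.I * ((t : ℕ) : ℂ) * ((t' : ℕ) : ℂ) / N) := by
  rw [fourierMatrix, of_apply, exp_neg_two_pi_I_div_pow]
  push_cast
  ring_nf

lemma isPrimitiveRoot_exp_neg (N : ℕ) (hN : N ≠ 0) :
    IsPrimitiveRoot (Complex.exp (-2 * Real.pi * Complex.I / N)) N := by
  have h : Complex.exp (-2 * Real.pi * Complex.I / N) =
      (Complex.exp (2 * Real.pi * Complex.I / N))⁻¹ := by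
    rw [← Complex.exp_neg]
    ring_nf
  exact h ▸ (Complex.isPrimitiveRoot_exp N hN).inv

lemma geom_sum_eq_zero_of_pow_eq_one {K : Type*} [DivisionRing K] {ζ : K} (h1 : ζ ^ N = 1)
    (hζ : ζ ≠ 1) : ∑ k : Fin N, ζ ^ (k : ℕ) = 0 := by
  rw [Fin.sum_univ_eq_sum_range (ζ ^ ·), geom_sum_eq hζ, h1, sub_self, zero_div]

lemma fourierMatrix_conjTranspose_transpose :
    (fourierMatrix N ω)ᴴᵀ = (fourierMatrix N ω)ᴴ := by
  rw [conjTranspose_transpose, ← transpose_conjTranspose, fourierMatrix_transpose]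

variable [NeZero N]

lemma fourierMatrix_mul_conjTranspose (hω : IsPrimitiveRoot ω N) :
    fourierMatrix N ω * (fourierMatrix N ω)ᴴ = (N : ℂ) • 1 := by
  have hω0 : ω ≠ 0 := hω.ne_zero (NeZero.ne N)
  have hstar : star ω = ω⁻¹ := (Complex.inv_eq_conj (hω.norm'_eq_one (NeZero.ne N))).symm
  ext t s
  have hterm : ∀ k : Fin N, fourierMatrix N ω t k * (fourierMatrix N ω)ᴴ k s =
      (ω ^ (t : ℕ) * ω⁻¹ ^ (s : ℕ)) ^ (k : ℕ) := fun k => by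
    simp only [conjTranspose_apply, fourierMatrix, of_apply, star_pow, hstar, mul_pow, ← pow_mul]
  rw [Matrix.mul_apply, Finset.sum_congr rfl fun k _ => hterm k, Matrix.smul_apply, one_apply]
  by_cases hts : t = s
  · subst hts
    simp [inv_pow, hω0]
  · rw [if_neg hts, smul_zero]
    refine geom_sum_eq_zero_of_pow_eq_one ?_ fun h => hts ?_
    · rw [mul_pow, inv_pow, inv_pow, ← pow_mul, ← pow_mul, mul_comm (t : ℕ), mul_comm (s : ℕ),
        pow_mul, pow_mul, hω.pow_eq_one]
      simp
    · refine Fin.ext (hω.pow_inj t.isLt s.isLt ?_)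
      rwa [inv_pow, mul_inv_eq_one₀ (pow_ne_zero _ hω0)] at h

lemma l2_opNorm_fourierMatrix (hω : IsPrimitiveRoot ω N) : ‖fourierMatrix N ω‖ = √N := by
  have h := l2_opNorm_conjTranspose_mul_self (fourierMatrix N ω)ᴴ
  rw [conjTranspose_conjTranspose, fourierMatrix_mul_conjTranspose hω, l2_opNorm_conjTranspose,
    norm_smul] at h
  rw [← Real.sqrt_mul_self (norm_nonneg _), ← h]
  simp

lemma fourierMatrix_conj_map_eq_diagonal_pow_mul (hω : IsPrimitiveRoot ω N) {γ : Fin N → ℂ}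
    (hγ : ∀ t ≠ 0, γ t = (N : ℂ)⁻¹ * (diffSymbol N ω t)⁻¹) (m : ℕ) {A : Matrix (Fin N) (Fin N) ℝ}
    (hsymm : A.IsSymm) (hsum : A *ᵥ 1 = 0) :
    fourierMatrix N ω * A.map ofReal * (fourierMatrix N ω)ᵀ =
      diagonal (γ ^ m) *
        (fourierMatrix N ω * ((mixedDiff N)^[m] A).map ofReal * (fourierMatrix N ω)ᵀ) *
        diagonal (γ ^ m) := by
  have hrow : A.map ofReal *ᵥ 1 = 0 := by
    ext i
    simpa [mulVec, dotProduct] using congrArg ofReal (congrFun hsum i)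
  have hcol : 1 ᵥ* A.map ofReal = 0 := by
    rw [← mulVec_transpose, ← transpose_map, hsymm.eq, hrow]
  have hγ' (t : Fin N) (ht : t ≠ 0) : γ t * (N * diffSymbol N ω t) = 1 := by
    rw [hγ t ht, mul_mul_mul_comm, inv_mul_cancel₀ (Nat.cast_ne_zero.2 (NeZero.ne N)),
      inv_mul_cancel₀ (diffSymbol_ne_zero hω ht), one_mul]
  rw [map_iterate_mixedDiff]
  exact fourierMatrix_conj_eq_diagonal_pow_mul_iterate hω.pow_eq_one hγ' m hrow hcol

lemma l2_opNorm_residual_le (hω : IsPrimitiveRoot ω N) (I : Finset (Fin N))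
    {C : Matrix (Fin N) (Fin N) ℂ} {μ : ℝ} (hC : ∀ i j, ‖C i j‖ ≤ μ) {d : Fin N → ℂ} {g : ℝ}
    (hg : 0 ≤ g) (hd : ∀ i, ‖d i‖ ≤ 1) (hdg : ∀ i ∉ I, ‖d i‖ ≤ g) {B : Matrix (Fin N) (Fin N) ℂ}
    (hB : B = diagonal d * (fourierMatrix N ω * C * (fourierMatrix N ω)ᵀ) * diagonal d) :
    ‖((N : ℂ) ^ 2)⁻¹ • ((fourierMatrix N ω)ᴴ * (B - blockProj ℂ I * B * blockProj ℂ I) *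
      (fourierMatrix N ω)ᴴ)‖ ≤ 2 * g * N * μ := by
  have hN : (0 : ℝ) ≤ N := Nat.cast_nonneg N
  have hW : ‖fourierMatrix N ω‖ ≤ √N := (l2_opNorm_fourierMatrix hω).le
  have hWt : ‖(fourierMatrix N ω)ᵀ‖ ≤ √N := by rwa [fourierMatrix_transpose]
  have hWh : ‖(fourierMatrix N ω)ᴴ‖ ≤ √N := by rwa [l2_opNorm_conjTranspose]
  have hChat : ‖fourierMatrix N ω * C * (fourierMatrix N ω)ᵀ‖ ≤ N * (N * μ) :=
    (l2_opNorm_mul_mul_le_of_le_sqrt hN hW hWt C).trans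
      (mul_le_mul_of_nonneg_left (by simpa using l2_opNorm_le_card_mul C hC) hN)
  have hres : ‖B - blockProj ℂ I * B * blockProj ℂ I‖ ≤ 2 * g * (N * (N * μ)) :=
    hB ▸ (l2_opNorm_sub_blockProj_conj_le I _ hg hd hdg).trans
      (mul_le_mul_of_nonneg_left hChat (mul_nonneg zero_le_two hg))
  calc _ ≤ ((N : ℝ) ^ 2)⁻¹ * (N * (2 * g * (N * (N * μ)))) := by
        rw [norm_smul, norm_inv, norm_pow, Complex.norm_natCast]
        gcongr
        exact (l2_opNorm_mul_mul_le_of_le_sqrt hN hWh hWh _).trans (by gcongr)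
    _ = 2 * g * N * μ := by
        have : (N : ℝ) ≠ 0 := Nat.cast_ne_zero.2 (NeZero.ne N)
        field_simp

end ComplexFourierMatrix

theorem residual_opNorm_le_general (N : ℕ) [NeZero N]
    (A : Matrix (Fin N) (Fin N) ℝ) (hsymm : A.IsSymm)
    (hsum : A.mulVec (fun _ => 1) = 0)
    (F : Matrix (Fin N) (Fin N) ℂ)
    (hF : ∀ t t', F t t' =
      Complex.exp (-2 * Real.pi * Complex.I * ((t : ℕ) : ℂ) * ((t' : ℕ) : ℂ) / N))
    (γ : Fin N → ℂ)
    (hγ : ∀ t : Fin N, t ≠ 0 →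
      γ t = (N : ℂ)⁻¹ * (1 - Complex.exp (-2 * Real.pi * Complex.I * ((t : ℕ) : ℂ) / N))⁻¹)
    (hγle : ∀ t, ‖γ t‖ ≤ 1)
    (I : Finset (Fin N)) (hJ : Iᶜ.Nonempty)
    (Ahat : Matrix (Fin N) (Fin N) ℂ)
    (hAhat : Ahat = F * A.map (fun a => (a : ℂ)) * F.transpose)
    (AhatI : Matrix (Fin N) (Fin N) ℂ)
    (hAhatI : ∀ i j, AhatI i j = if i ∈ I ∧ j ∈ I then Ahat i j else 0)
    (Ares : Matrix (Fin N) (Fin N) ℂ)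
    (hAres : Ares = ((N : ℂ) ^ 2)⁻¹ •
      (F.conjTranspose * (Ahat - AhatI) * F.conjTranspose.transpose))
    (m : ℕ) :
    ‖Matrix.toEuclideanCLM (𝕜 := ℂ) Ares‖ ≤
      3 * (Iᶜ.sup' hJ fun t => (‖γ t‖) ^ m) * N *
        ((Finset.univ : Finset (Fin N × Fin N)).sup'
          (Finset.univ_nonempty)
          fun p => |((mixedDiff N)^[m] A) p.1 p.2|) := by
  set ω : ℂ := Complex.exp (-2 * Real.pi * Complex.I / N)
  have hω : IsPrimitiveRoot ω N := isPrimitiveRoot_exp_neg N (NeZero.ne N)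
  have hFW : F = fourierMatrix N ω := ext fun t t' => by rw [hF, fourierMatrix_exp_neg_apply]
  have hγW (t : Fin N) (ht : t ≠ 0) : γ t = (N : ℂ)⁻¹ * (diffSymbol N ω t)⁻¹ := by
    rw [hγ t ht, diffSymbol, exp_neg_two_pi_I_div_pow]
  have hAhatI_eq : AhatI = blockProj ℂ I * Ahat * blockProj ℂ I :=
    ext fun i j => by rw [hAhatI, blockProj_mul_mul_blockProj_apply]
  rw [hFW, fourierMatrix_conjTranspose_transpose, hAhatI_eq] at hAres
  set g := Iᶜ.sup' hJ fun t => ‖γ t‖ ^ m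
  set C := (mixedDiff N)^[m] A
  set μ := (Finset.univ : Finset (Fin N × Fin N)).sup' Finset.univ_nonempty fun p => |C p.1 p.2|
  have hμ (i j : Fin N) : ‖C.map ofReal i j‖ ≤ μ := by
    simpa using Finset.le_sup' (fun p : Fin N × Fin N => |C p.1 p.2|) (Finset.mem_univ (i, j))
  have hg0 : 0 ≤ g := hJ.elim fun t ht =>
    (pow_nonneg (norm_nonneg _) m).trans (Finset.le_sup' (fun t => ‖γ t‖ ^ m) ht)
  have hAhat_eq : Ahat = diagonal (γ ^ m) *
      (fourierMatrix N ω * C.map ofReal * (fourierMatrix N ω)ᵀ) * diagonal (γ ^ m) := by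
    rw [hAhat, hFW]
    exact fourierMatrix_conj_map_eq_diagonal_pow_mul hω hγW m hsymm hsum
  have hres : ‖Ares‖ ≤ 2 * g * N * μ := by
    rw [hAres]
    exact l2_opNorm_residual_le hω I hμ hg0
      (fun i => by simpa using pow_le_one₀ (norm_nonneg _) (hγle i))
      (fun i hi => by simpa using Finset.le_sup' (fun t => ‖γ t‖ ^ m) (Finset.mem_compl.2 hi))
      hAhat_eq
  have hgNμ : 0 ≤ g * N * μ := mul_nonneg (by positivity) ((norm_nonneg _).trans (hμ 0 0))
  calc ‖toEuclideanCLM (𝕜 := ℂ) Ares‖ = ‖Ares‖ := l2_opNorm_toEuclideanCLM Ares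
    _ ≤ 2 * g * N * μ := hres
    _ ≤ 3 * g * N * μ := by linarith

theorem residual_opNorm_le (N : ℕ) [NeZero N]
    (A : Matrix (Fin N) (Fin N) ℝ) (hsymm : A.IsSymm)
    (hsum : A.mulVec (fun _ => 1) = 0)
    (F : Matrix (Fin N) (Fin N) ℂ)
    (hF : ∀ t t', F t t' =
      Complex.exp (-2 * Real.pi * Complex.I * ((t : ℕ) : ℂ) * ((t' : ℕ) : ℂ) / N))
    (γ : Fin N → ℂ) (hγ0 : γ 0 = 1)
    (hγ : ∀ t : Fin N, t ≠ 0 →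
      γ t = (N : ℂ)⁻¹ * (1 - Complex.exp (-2 * Real.pi * Complex.I * ((t : ℕ) : ℂ) / N))⁻¹)
    (hγle : ∀ t, ‖γ t‖ ≤ 1)
    (I : Finset (Fin N)) (hJ : Iᶜ.Nonempty)
    (Ahat : Matrix (Fin N) (Fin N) ℂ)
    (hAhat : Ahat = F * A.map (fun a => (a : ℂ)) * F.transpose)
    (AhatI : Matrix (Fin N) (Fin N) ℂ)
    (hAhatI : ∀ i j, AhatI i j = if i ∈ I ∧ j ∈ I then Ahat i j else 0)
    (Ares : Matrix (Fin N) (Fin N) ℂ)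
    (hAres : Ares = ((N : ℂ) ^ 2)⁻¹ •
      (F.conjTranspose * (Ahat - AhatI) * F.conjTranspose.transpose))
    (m : ℕ) (hm : 0 < m) :
    ‖Matrix.toEuclideanCLM (𝕜 := ℂ) Ares‖ ≤
      3 * (Iᶜ.sup' hJ fun t => (‖γ t‖) ^ m) * N *
        ((Finset.univ : Finset (Fin N × Fin N)).sup'
          (Finset.univ_nonempty)
          fun p => |((mixedDiff N)^[m] A) p.1 p.2|) :=
  residual_opNorm_le_general N A hsymm hsum F hF γ hγ hγle I hJ Ahat hAhat AhatI hAhatI Ares hAres m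
end

section
/- Let B₁⁰, B₂⁰ ⊂ ℝ^d be finite sets of vectors with norm at most 1 and mutual incoherence incoh := max{|⟨c,t⟩| : c ∈ B₁⁰, t ∈ B₂⁰}, and let B_α = {λu : u ∈ B_α⁰, λ ∈ [-1,1]}. Suppose for α, β ∈ {1,2}, W_{αβ} ∈ ℝ^{d×d} is O(1)-sparsely represented by bases B_α, B_β, and set W = W₁₁ + W₁₂ + W₂₁ + W₂₂. Then for any x^q = c^q + t^q and x^k = c^k + t^k with c^q, c^k ∈ B₁ and t^q, t^k ∈ B₂, the kernel K_W(z,z') = exp(zᵀWz') satisfies K_W(x^q, x^k) = (1 + O(incoh)) · K_{W₁₁}(c^q, c^k) · K_{W₁₂}(c^q, t^k) · K_{W₂₁}(t^q, c^k) · K_{W₂₂}(t^q, t^k). -/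
/-!
Write `x₁ = cq, x₂ = tq, y₁ = ck, y₂ = tk`. Expanding `W_{αβ}(x₁ + x₂, y₁ + y₂)` bilinearly
leaves, besides `W_{αβ}(x_α, y_β)`, three cross terms, in each of which some argument meets the
atoms of the other basis in the sparse representation; so each is at most `s · incoh`. Hence the
exponent differs from the sum of the four factorized exponents by some `D` with
`|D| ≤ 12 s · incoh`, and `θ = exp D` satisfies `|θ - 1| ≤ |D| exp |D|`.
-/
open Finset

/-- Membership in the extended overcomplete basis `{λu : u ∈ B, λ ∈ [-1,1]}`. -/
def extMem {d : ℕ} (B : Finset (EuclideanSpace ℝ (Fin d)))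
    (w : EuclideanSpace ℝ (Fin d)) : Prop :=
  ∃ u ∈ B, ∃ l : ℝ, |l| ≤ 1 ∧ w = l • u

/-- The bilinear form `(x, y) ↦ xᵀ W y` is `s`-sparsely represented by the bases `B`, `B'`:
`W = ∑_{k ≤ s} a_k u_k v_kᵀ` with `a_k ∈ [-1,1]`, `u_k ∈ B` (extended), `v_k ∈ B'` (extended). -/
def SparseRep {d : ℕ} (s : ℕ) (B B' : Finset (EuclideanSpace ℝ (Fin d)))
    (W : EuclideanSpace ℝ (Fin d) → EuclideanSpace ℝ (Fin d) → ℝ) : Prop :=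
  ∃ (a : Fin s → ℝ) (u v : Fin s → EuclideanSpace ℝ (Fin d)),
    (∀ k, |a k| ≤ 1) ∧ (∀ k, extMem B (u k)) ∧ (∀ k, extMem B' (v k)) ∧
    ∀ x y, W x y = ∑ k, a k * (inner ℝ (u k) x : ℝ) * (inner ℝ (v k) y : ℝ)

variable {d s : ℕ}

lemma abs_inner_le_one_of_norm_le_one {B B' : Finset (EuclideanSpace ℝ (Fin d))}
    (hB : ∀ u ∈ B, ‖u‖ ≤ 1) (hB' : ∀ v ∈ B', ‖v‖ ≤ 1) :
    ∀ u ∈ B, ∀ v ∈ B', |(inner ℝ u v : ℝ)| ≤ 1 := fun u hu v hv =>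
  (abs_real_inner_le_norm u v).trans (mul_le_one₀ (hB u hu) (norm_nonneg v) (hB' v hv))

lemma extMem.abs_inner_le {B B' : Finset (EuclideanSpace ℝ (Fin d))} {r : ℝ}
    {x y : EuclideanSpace ℝ (Fin d)} (hx : extMem B x) (hy : extMem B' y)
    (h : ∀ u ∈ B, ∀ v ∈ B', |(inner ℝ u v : ℝ)| ≤ r) :
    |(inner ℝ x y : ℝ)| ≤ r := by
  obtain ⟨u, hu, l, hl, rfl⟩ := hx
  obtain ⟨v, hv, m, hm, rfl⟩ := hy
  have huv := h u hu v hv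
  rw [real_inner_smul_left, real_inner_smul_right, abs_mul, abs_mul]
  calc |l| * (|m| * |(inner ℝ u v : ℝ)|) ≤ 1 * (1 * r) :=
        mul_le_mul hl (mul_le_mul hm huv (abs_nonneg _) zero_le_one) (by positivity) zero_le_one
    _ = r := by ring

namespace SparseRep

variable {B B' : Finset (EuclideanSpace ℝ (Fin d))}
  {W : EuclideanSpace ℝ (Fin d) → EuclideanSpace ℝ (Fin d) → ℝ}

lemma map_add (hW : SparseRep s B B' W) (x x' y y' : EuclideanSpace ℝ (Fin d)) :
    W (x + x') (y + y') = W x y + W x y' + W x' y + W x' y' := by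
  obtain ⟨a, u, v, -, -, -, hf⟩ := hW
  simp only [hf, inner_add_right, ← sum_add_distrib]
  exact sum_congr rfl fun k _ => by ring

lemma abs_apply_le (hW : SparseRep s B B' W) {x y : EuclideanSpace ℝ (Fin d)} {a b : ℝ}
    (hx : ∀ u, extMem B u → |(inner ℝ u x : ℝ)| ≤ a)
    (hy : ∀ v, extMem B' v → |(inner ℝ v y : ℝ)| ≤ b) :
    |W x y| ≤ s * (a * b) := by
  obtain ⟨c, u, v, hc, hu, hv, hf⟩ := hW
  have hterm (k : Fin s) : |c k * (inner ℝ (u k) x : ℝ) * (inner ℝ (v k) y : ℝ)| ≤ a * b := by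
    have hux := hx _ (hu k)
    have ha : 0 ≤ a := (abs_nonneg _).trans hux
    rw [abs_mul, abs_mul]
    calc |c k| * |(inner ℝ (u k) x : ℝ)| * |(inner ℝ (v k) y : ℝ)| ≤ 1 * a * b :=
          mul_le_mul (mul_le_mul (hc k) hux (abs_nonneg _) zero_le_one) (hy _ (hv k))
            (abs_nonneg _) (by positivity)
      _ = a * b := by ring
  rw [hf]
  calc |∑ k, c k * (inner ℝ (u k) x : ℝ) * (inner ℝ (v k) y : ℝ)|
      ≤ ∑ k, |c k * (inner ℝ (u k) x : ℝ) * (inner ℝ (v k) y : ℝ)| := abs_sum_le_sum_abs _ _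
    _ ≤ ∑ _k : Fin s, a * b := sum_le_sum fun k _ => hterm k
    _ = s * (a * b) := by simp

lemma abs_apply_add_sub_le (hW : SparseRep s B B' W) {ε : ℝ} (hε₀ : 0 ≤ ε) (hε₁ : ε ≤ 1)
    {x x' y y' : EuclideanSpace ℝ (Fin d)}
    (hx : ∀ u, extMem B u → |(inner ℝ u x : ℝ)| ≤ 1)
    (hx' : ∀ u, extMem B u → |(inner ℝ u x' : ℝ)| ≤ ε)
    (hy : ∀ v, extMem B' v → |(inner ℝ v y : ℝ)| ≤ 1)
    (hy' : ∀ v, extMem B' v → |(inner ℝ v y' : ℝ)| ≤ ε) :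
    |W (x + x') (y + y') - W x y| ≤ 3 * s * ε := by
  have h₁ := hW.abs_apply_le hx hy'
  have h₂ := hW.abs_apply_le hx' hy
  have h₃ := hW.abs_apply_le hx' hy'
  have hεε : (s : ℝ) * (ε * ε) ≤ s * ε :=
    mul_le_mul_of_nonneg_left (mul_le_of_le_one_left hε₀ hε₁) s.cast_nonneg
  rw [hW.map_add, show ∀ p q r t : ℝ, p + q + r + t - p = q + r + t by intros; ring]
  calc _ ≤ |W x y'| + |W x' y| + |W x' y'| := abs_add_three _ _ _
    _ ≤ 3 * s * ε := by linarith

end SparseRep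

lemma abs_add_four_le {α : Type*} [AddCommGroup α] [LinearOrder α] [IsOrderedAddMonoid α]
    (a b c d : α) : |a + b + c + d| ≤ |a| + |b| + |c| + |d| :=
  (abs_add_le _ _).trans (add_le_add_left (abs_add_three a b c) _)

lemma abs_exp_sub_one_le_abs_mul_exp_abs (x : ℝ) : |Real.exp x - 1| ≤ |x| * Real.exp |x| := by
  have h₁ : 1 ≤ Real.exp |x| := Real.one_le_exp (abs_nonneg x)
  have h₂ : Real.exp x ≤ Real.exp |x| := Real.exp_le_exp.2 (le_abs_self x)
  have h₃ : (1 - |x|) * Real.exp |x| ≤ 1 := by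
    have := mul_le_mul_of_nonneg_right (Real.add_one_le_exp (-|x|)) (Real.exp_pos |x|).le
    rwa [← Real.exp_add, neg_add_cancel, Real.exp_zero, neg_add_eq_sub] at this
  rw [abs_le]
  constructor
  · nlinarith [Real.add_one_le_exp x, neg_abs_le x, abs_nonneg x]
  · nlinarith

lemma abs_exp_sub_one_le_of_abs_le {x K ε : ℝ} (hx : |x| ≤ K * ε) (hK : 0 ≤ K) (hε : ε ≤ 1) :
    |Real.exp x - 1| ≤ K * Real.exp K * ε := by
  have hxK : |x| ≤ K := hx.trans (mul_le_of_le_one_right hK hε)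
  calc |Real.exp x - 1| ≤ |x| * Real.exp |x| := abs_exp_sub_one_le_abs_mul_exp_abs x
    _ ≤ K * ε * Real.exp K :=
        mul_le_mul hx (Real.exp_le_exp.2 hxK) (Real.exp_pos _).le ((abs_nonneg x).trans hx)
    _ = K * Real.exp K * ε := by ring

/-- Theorem 2: with incoherent bases, the exponential attention kernel factorizes into four
components, each with its own weight matrix, up to a multiplicative `1 + O(incoh)` error. -/
theorem kernel_factorization (s : ℕ) :
    ∃ C > (0 : ℝ), ∀ (d : ℕ) (B₁ B₂ : Finset (EuclideanSpace ℝ (Fin d))),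
      (∀ u ∈ B₁, ‖u‖ ≤ 1) → (∀ u ∈ B₂, ‖u‖ ≤ 1) →
      ∀ incoh : ℝ, 0 ≤ incoh → incoh ≤ 1 →
      (∀ c ∈ B₁, ∀ t ∈ B₂, |(inner ℝ c t : ℝ)| ≤ incoh) →
      ∀ W₁₁ W₁₂ W₂₁ W₂₂ : EuclideanSpace ℝ (Fin d) → EuclideanSpace ℝ (Fin d) → ℝ,
      SparseRep s B₁ B₁ W₁₁ → SparseRep s B₁ B₂ W₁₂ →
      SparseRep s B₂ B₁ W₂₁ → SparseRep s B₂ B₂ W₂₂ →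
      ∀ cq ck tq tk : EuclideanSpace ℝ (Fin d),
      extMem B₁ cq → extMem B₁ ck → extMem B₂ tq → extMem B₂ tk →
      ∀ xq xk : EuclideanSpace ℝ (Fin d), xq = cq + tq → xk = ck + tk →
      ∃ θ : ℝ, |θ - 1| ≤ C * incoh ∧
        Real.exp (W₁₁ xq xk + W₁₂ xq xk + W₂₁ xq xk + W₂₂ xq xk) =
          θ * (Real.exp (W₁₁ cq ck) * Real.exp (W₁₂ cq tk) *
            Real.exp (W₂₁ tq ck) * Real.exp (W₂₂ tq tk)) := by
  refine ⟨12 * s * Real.exp (12 * s) + 1, by positivity, ?_⟩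
  intro d B₁ B₂ hB₁ hB₂ ε hε₀ hε₁ hinc W₁₁ W₁₂ W₂₁ W₂₂ h₁₁ h₁₂ h₂₁ h₂₂
    cq ck tq tk hcq hck htq htk xq xk rfl rfl
  have one₁ {x} (hx : extMem B₁ x) u (hu : extMem B₁ u) : |(inner ℝ u x : ℝ)| ≤ 1 :=
    hu.abs_inner_le hx (abs_inner_le_one_of_norm_le_one hB₁ hB₁)
  have one₂ {x} (hx : extMem B₂ x) u (hu : extMem B₂ u) : |(inner ℝ u x : ℝ)| ≤ 1 :=
    hu.abs_inner_le hx (abs_inner_le_one_of_norm_le_one hB₂ hB₂)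
  have inc₁ {x} (hx : extMem B₂ x) u (hu : extMem B₁ u) : |(inner ℝ u x : ℝ)| ≤ ε :=
    hu.abs_inner_le hx hinc
  have inc₂ {x} (hx : extMem B₁ x) u (hu : extMem B₂ u) : |(inner ℝ u x : ℝ)| ≤ ε :=
    hu.abs_inner_le hx fun t ht c hc => real_inner_comm t c ▸ hinc c hc t ht
  have e₁₁ := h₁₁.abs_apply_add_sub_le hε₀ hε₁ (one₁ hcq) (inc₁ htq) (one₁ hck) (inc₁ htk)
  have e₁₂ := h₁₂.abs_apply_add_sub_le hε₀ hε₁ (one₁ hcq) (inc₁ htq) (one₂ htk) (inc₂ hck)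
  have e₂₁ := h₂₁.abs_apply_add_sub_le hε₀ hε₁ (one₂ htq) (inc₂ hcq) (one₁ hck) (inc₁ htk)
  have e₂₂ := h₂₂.abs_apply_add_sub_le hε₀ hε₁ (one₂ htq) (inc₂ hcq) (one₂ htk) (inc₂ hck)
  rw [add_comm tk ck] at e₁₂ e₂₂
  rw [add_comm tq cq] at e₂₁ e₂₂
  set D := (W₁₁ (cq + tq) (ck + tk) - W₁₁ cq ck) + (W₁₂ (cq + tq) (ck + tk) - W₁₂ cq tk)
    + (W₂₁ (cq + tq) (ck + tk) - W₂₁ tq ck) + (W₂₂ (cq + tq) (ck + tk) - W₂₂ tq tk)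
  have hD : |D| ≤ 12 * s * ε := (abs_add_four_le _ _ _ _).trans (by linarith)
  refine ⟨Real.exp D, ?_, ?_⟩
  · have := abs_exp_sub_one_le_of_abs_le hD (by positivity) hε₁
    linarith
  · simp only [D, ← Real.exp_add]
    ring_nf
end
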